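/- Let V = {(x_1,…,x_n) ∈ ℂ^n : x_1 + ⋯ + x_n = 0} be the reflection representation of S_n inside the permutation representation ℂ^n. Then the sets of Lie elements coincide: Lie(ℂ^n) = Lie(V), i.e. x ∈ ℂ[S_n] satisfies Grp_m(x) = Alg_m(x) on Λ^m ℂ^n for all m ≤ n if and only if it satisfies the analogous conditions on Λ^m V for all m ≤ n−1. -/

import Mathlib

open ExteriorAlgebra

variable (k : Type*) [Field k] {G : Type*} [Group G]
variable {V : Type*} [AddCommGroup V] [Module k V]

/-- The alternating map `v ↦ Σ_p v_1 ∧ … ∧ f(v_p) ∧ … ∧ v_m`, landing in the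
exterior algebra. -/
noncomputable def algAlt (f : Module.End k V) (m : ℕ) :
    V [⋀^Fin m]→ₗ[k] ExteriorAlgebra k V where
  toMultilinearMap :=
    ∑ p : Fin m, (ιMulti k m).toMultilinearMap.compLinearMap
      (Function.update (fun _ : Fin m => (LinearMap.id : V →ₗ[k] V)) p f)
  map_eq_zero_of_eq' := by
    intro v i j hv hij
    show (∑ p : Fin m, (ιMulti k m).toMultilinearMap.compLinearMap
      (Function.update (fun _ : Fin m => (LinearMap.id : V →ₗ[k] V)) p f)) v = 0
    have key : ∀ p : Fin m,
        ((ιMulti k m).toMultilinearMap.compLinearMap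
          (Function.update (fun _ : Fin m => (LinearMap.id : V →ₗ[k] V)) p f)) v
        = ιMulti k m (Function.update v p (f (v p))) := by
      intro p
      have harg : (fun x => (Function.update (fun _ : Fin m => (LinearMap.id : V →ₗ[k] V)) p f x) (v x))
          = Function.update v p (f (v p)) := by
        funext x
        rcases eq_or_ne x p with rfl | hx
        · simp
        · simp [Function.update_of_ne hx]
      rw [MultilinearMap.compLinearMap_apply, harg]
      rfl
    rw [MultilinearMap.sum_apply]
    calc (∑ p : Fin m, ((ιMulti k m).toMultilinearMap.compLinearMap
          (Function.update (fun _ : Fin m => (LinearMap.id : V →ₗ[k] V)) p f)) v)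
        = ∑ p ∈ ({i, j} : Finset (Fin m)), ιMulti k m (Function.update v p (f (v p))) := by
          rw [Finset.sum_congr rfl (fun p _ => key p)]
          refine (Finset.sum_subset (Finset.subset_univ _) ?_).symm
          intro p _ hp
          simp only [Finset.mem_insert, Finset.mem_singleton, not_or] at hp
          exact AlternatingMap.map_eq_zero_of_eq _ _
            (by rw [Function.update_of_ne (Ne.symm ?_), Function.update_of_ne (Ne.symm ?_), hv]
                exacts [hp.2, hp.1]) hij
      _ = 0 := by
          rw [Finset.sum_pair hij]
          have hcomp : Function.update v j (f (v j))
              = (Function.update v i (f (v i))) ∘ Equiv.swap i j := by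
            funext x
            rcases eq_or_ne x i with rfl | hxi
            · show Function.update v j (f (v j)) x = Function.update v x (f (v x)) (Equiv.swap x j x)
              rw [Function.update_of_ne hij, Equiv.swap_apply_left,
                Function.update_of_ne (Ne.symm hij)]
              exact hv
            rcases eq_or_ne x j with rfl | hxj
            · show Function.update v x (f (v x)) x = Function.update v i (f (v i)) (Equiv.swap i x x)
              rw [Function.update_self, Equiv.swap_apply_right, Function.update_self, hv]
            · show Function.update v j (f (v j)) x = Function.update v i (f (v i)) (Equiv.swap i j x)
              rw [Function.update_of_ne hxj, Equiv.swap_apply_of_ne_of_ne hxi hxj,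
                Function.update_of_ne hxi]
          rw [hcomp, AlternatingMap.map_swap _ _ hij, add_neg_cancel]

/-- The derivation `D_f` on the exterior algebra extending `f : V → V`. -/
noncomputable def derOp (f : Module.End k V) :
    ExteriorAlgebra k V →ₗ[k] ExteriorAlgebra k V :=
  ExteriorAlgebra.liftAlternating (fun m => algAlt k f m)

theorem derOp_mem (f : Module.End k V) (m : ℕ) :
    ∀ x ∈ ⋀[k]^m V, derOp k f x ∈ ⋀[k]^m V := by
  intro x hx
  rw [← ExteriorAlgebra.ιMulti_span_fixedDegree] at hx ⊢
  induction hx using Submodule.span_induction with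
  | mem x hx =>
      obtain ⟨v, rfl⟩ := hx
      rw [derOp, ExteriorAlgebra.liftAlternating_apply_ιMulti]
      show (∑ p : Fin m, (ιMulti k m).toMultilinearMap.compLinearMap
        (Function.update (fun _ : Fin m => (LinearMap.id : V →ₗ[k] V)) p f)) v ∈ _
      rw [MultilinearMap.sum_apply]
      refine Submodule.sum_mem _ fun p _ => Submodule.subset_span ⟨_, rfl⟩
  | zero => simp
  | add x y _ _ hx hy => rw [map_add]; exact Submodule.add_mem _ hx hy
  | smul c x _ hx => rw [map_smul]; exact Submodule.smul_mem _ c hx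

theorem mapOp_mem (f : Module.End k V) (m : ℕ) :
    ∀ x ∈ ⋀[k]^m V, (ExteriorAlgebra.map f) x ∈ ⋀[k]^m V := by
  intro x hx
  rw [← ExteriorAlgebra.ιMulti_span_fixedDegree] at hx ⊢
  induction hx using Submodule.span_induction with
  | mem x hx =>
      obtain ⟨v, rfl⟩ := hx
      rw [ExteriorAlgebra.map_apply_ιMulti]
      exact Submodule.subset_span ⟨_, rfl⟩
  | zero => simp
  | add x y _ _ hx hy => rw [map_add]; exact Submodule.add_mem _ hx hy
  | smul c x _ hx => rw [map_smul]; exact Submodule.smul_mem _ c hx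

/-- `Grp_m : k[G] → End(Λ^m V)`, the linear extension of `g ↦ (v₁∧…∧vₘ ↦ g v₁∧…∧g vₘ)`. -/
noncomputable def GrpOp (ρ : Representation k G V) (m : ℕ) :
    MonoidAlgebra k G →ₗ[k] Module.End k (⋀[k]^m V) :=
  Finsupp.lift (Module.End k (⋀[k]^m V)) k G
    (fun g => ((ExteriorAlgebra.map (ρ g)).toLinearMap).restrict (mapOp_mem k (ρ g) m))
    ∘ₗ (MonoidAlgebra.coeffLinearEquiv k).toLinearMap

/-- `Alg_m : k[G] → End(Λ^m V)`, the linear extension of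
`g ↦ (v₁∧…∧vₘ ↦ Σ_p v₁∧…∧g vₚ∧…∧vₘ)`. -/
noncomputable def AlgOp (ρ : Representation k G V) (m : ℕ) :
    MonoidAlgebra k G →ₗ[k] Module.End k (⋀[k]^m V) :=
  Finsupp.lift (Module.End k (⋀[k]^m V)) k G
    (fun g => (derOp k (ρ g)).restrict (derOp_mem k (ρ g) m))
    ∘ₗ (MonoidAlgebra.coeffLinearEquiv k).toLinearMap

/-- `x ∈ k[G]` is a Lie element for the representation `ρ` if `Grp_m x = Alg_m x`
for all `m = 0, 1, …, dim V`. -/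
def IsLieElement (ρ : Representation k G V) (x : MonoidAlgebra k G) : Prop :=
  ∀ m ≤ Module.finrank k V, GrpOp k ρ m x = AlgOp k ρ m x
/-- The permutation representation of `S_n` on `ℂ^n`: `σ` sends the basis vector `v_p`
to `v_{σ(p)}`, i.e. `(σ·x) i = x (σ⁻¹ i)`. -/
noncomputable def permRep (n : ℕ) : Representation ℂ (Equiv.Perm (Fin n)) (Fin n → ℂ) where
  toFun σ := LinearMap.funLeft ℂ ℂ ⇑σ⁻¹
  map_one' := by
    ext v i
    simp
  map_mul' σ τ := by
    refine LinearMap.ext fun v => funext fun i => ?_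
    simp [LinearMap.funLeft_apply, Equiv.Perm.mul_apply, mul_inv_rev, Module.End.mul_apply]

/-- The sum-zero hyperplane `V = {x ∈ ℂ^n : Σ_i x_i = 0}`, the reflection
representation of `S_n` inside the permutation representation. -/
noncomputable def sumZero (n : ℕ) : Submodule ℂ (Fin n → ℂ) where
  carrier := {x | ∑ i, x i = 0}
  add_mem' := by
    intro a b ha hb
    simp only [Set.mem_setOf_eq, Pi.add_apply, Finset.sum_add_distrib] at *
    rw [ha, hb, add_zero]
  zero_mem' := by simp
  smul_mem' := by
    intro c x hx
    simp only [Set.mem_setOf_eq, Pi.smul_apply, smul_eq_mul, ← Finset.mul_sum] at *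
    rw [hx, mul_zero]

theorem permRep_mem_sumZero {n : ℕ} (σ : Equiv.Perm (Fin n)) :
    ∀ x ∈ sumZero n, permRep n σ x ∈ sumZero n := by
  intro x hx
  show ∑ i, x (σ⁻¹ i) = 0
  rw [Equiv.sum_comp σ⁻¹ x]
  exact hx

/-- The reflection representation of `S_n` on the sum-zero hyperplane. -/
noncomputable def reflRep (n : ℕ) :
    Representation ℂ (Equiv.Perm (Fin n)) (sumZero n) where
  toFun σ := (permRep n σ).restrict (permRep_mem_sumZero σ)
  map_one' := by
    ext x
    simp [permRep, Equiv.Perm.one_symm] <;> rfl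
  map_mul' σ τ := by
    refine LinearMap.ext fun x => Subtype.ext ?_
    show permRep n (σ * τ) ↑x = permRep n σ (permRep n τ ↑x)
    rw [map_mul]
    rfl

/-!
Write `ℂ^n = V ⊕ ℂ𝟙` with `𝟙` fixed by `S_n`. Exterior powers above the dimension vanish, so on
either side the conditions say that `Grp(x) = Alg(x)` on the whole exterior algebra. That algebra
for `ℂ^n` is `ΛV + 𝟙 ∧ ΛV`. Both operators commute with the inclusion `ΛV → Λℂ^n`, and since `𝟙`
is fixed, `Grp(x) (𝟙 ∧ z) = 𝟙 ∧ Grp(x) z` while `Alg(x)` is a derivation: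
`Alg(x) (𝟙 ∧ z) = ε(x) 𝟙 ∧ z + 𝟙 ∧ Alg(x) z` with `ε(x) = Σ a_σ` the augmentation. The
degree-`0` condition on `V` is exactly `ε(x) = 0`.
-/

section

variable {k} {W : Type*} [AddCommGroup W] [Module k W]

theorem derOp_ιMulti (f : Module.End k V) {m : ℕ} (v : Fin m → V) :
    derOp k f (ιMulti k m v) = ∑ p, ιMulti k m (Function.update v p (f (v p))) := by
  simp only [derOp, liftAlternating_apply_ιMulti, algAlt, AlternatingMap.coe_mk,
    FunLike.coe_sum, Finset.sum_apply, MultilinearMap.compLinearMap_apply]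
  refine Finset.sum_congr rfl fun p _ => congrArg _ ?_
  ext i
  rcases eq_or_ne i p with rfl | hi
  · simp
  · simp [Function.update_of_ne hi]

theorem derOp_one (f : Module.End k V) : derOp k f 1 = 0 := by
  simpa using derOp_ιMulti f (m := 0) Fin.elim0

theorem ι_mul_ιMulti (v : V) {m : ℕ} (u : Fin m → V) :
    ι k v * ιMulti k m u = ιMulti k (m + 1) (Fin.cons v u) := by
  rw [ιMulti_succ_apply]; rfl

theorem derOp_ι_mul (f : Module.End k V) (v : V) (z : ExteriorAlgebra k V) :
    derOp k f (ι k v * z) = ι k (f v) * z + ι k v * derOp k f z := by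
  suffices derOp k f ∘ₗ LinearMap.mulLeft k (ι k v) =
      LinearMap.mulLeft k (ι k (f v)) + LinearMap.mulLeft k (ι k v) ∘ₗ derOp k f from
    congr($this z)
  ext m u
  simp only [LinearMap.compAlternatingMap_apply, LinearMap.comp_apply, LinearMap.add_apply,
    LinearMap.mulLeft_apply, ι_mul_ιMulti, derOp_ιMulti, Fin.sum_univ_succ, Finset.mul_sum]
  simp [Fin.update_cons_zero, ← Fin.cons_update]

theorem map_derOp (f : V →ₗ[k] W) {g : Module.End k V} {g' : Module.End k W}
    (hfg : ∀ v, f (g v) = g' (f v)) (z : ExteriorAlgebra k V) :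
    map f (derOp k g z) = derOp k g' (map f z) := by
  suffices (map f).toLinearMap ∘ₗ derOp k g = derOp k g' ∘ₗ (map f).toLinearMap from
    congr($this z)
  ext m v
  simp [derOp_ιMulti, Function.comp_update, hfg]

theorem ιMulti_eq_zero_of_finrank_lt [FiniteDimensional k V] {m : ℕ}
    (hm : Module.finrank k V < m) (v : Fin m → V) : ιMulti k m v = 0 :=
  (ιMulti k m).map_linearDependent v fun hv => by
    simpa using (hv.fintype_card_le_finrank.trans_lt hm)

theorem exists_eq_map_add_ι_mul_map {f : V →ₗ[k] W} {e : W}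
    (hfe : ∀ w, ∃ u, ∃ c : k, w = f u + c • e) (z : ExteriorAlgebra k W) :
    ∃ a b, z = map f a + ι k e * map f b := by
  -- The `y` multiplying this set into itself form a subalgebra, which contains every `ι w`.
  suffices ∀ y z, (∃ a b, z = map f a + ι k e * map f b) →
      ∃ a b, y * z = map f a + ι k e * map f b by
    simpa using this z 1 ⟨1, 0, by simp⟩
  intro y
  induction y using ExteriorAlgebra.induction with
  | algebraMap r =>
    rintro _ ⟨a, b, rfl⟩
    exact ⟨r • a, r • b, by rw [← Algebra.smul_def]; simp [smul_add]⟩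
  | ι w =>
    rintro _ ⟨a, b, rfl⟩
    obtain ⟨u, c, rfl⟩ := hfe w
    refine ⟨ι k u * a, c • a - ι k u * b, ?_⟩
    have hanti : ι k (f u) * ι k e = -(ι k e * ι k (f u)) :=
      eq_neg_of_add_eq_zero_left (ι_add_mul_swap _ _)
    simp only [map_add, map_smul, map_mul, map_sub, map_apply_ι, mul_add, add_mul, mul_sub,
      smul_mul_assoc, mul_smul_comm, ← mul_assoc, hanti, ι_sq_zero, zero_mul, smul_zero, neg_mul]
    abel
  | mul y₁ y₂ h₁ h₂ => exact fun z hz => by simpa [mul_assoc] using h₁ _ (h₂ z hz)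
  | add y₁ y₂ h₁ h₂ =>
    intro z hz
    obtain ⟨a₁, b₁, h₁⟩ := h₁ z hz
    obtain ⟨a₂, b₂, h₂⟩ := h₂ z hz
    exact ⟨a₁ + a₂, b₁ + b₂, by rw [add_mul, h₁, h₂]; simp [mul_add]; abel⟩

noncomputable def augmentation (x : MonoidAlgebra k G) : k :=
  x.coeff.sum fun _ a => a

noncomputable def exteriorGrp (ρ : Representation k G V) (x : MonoidAlgebra k G) :
    Module.End k (ExteriorAlgebra k V) :=
  x.coeff.sum fun g a => a • (map (ρ g)).toLinearMap

noncomputable def exteriorAlg (ρ : Representation k G V) (x : MonoidAlgebra k G) :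
    Module.End k (ExteriorAlgebra k V) :=
  x.coeff.sum fun g a => a • derOp k (ρ g)

theorem exteriorGrp_apply (ρ : Representation k G V) (x : MonoidAlgebra k G)
    (z : ExteriorAlgebra k V) :
    exteriorGrp ρ x z = x.coeff.sum fun g a => a • map (ρ g) z := by
  simp [exteriorGrp, Finsupp.sum, LinearMap.sum_apply]

theorem exteriorAlg_apply (ρ : Representation k G V) (x : MonoidAlgebra k G)
    (z : ExteriorAlgebra k V) :
    exteriorAlg ρ x z = x.coeff.sum fun g a => a • derOp k (ρ g) z := by
  simp [exteriorAlg, Finsupp.sum, LinearMap.sum_apply]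

theorem coe_GrpOp_apply (ρ : Representation k G V) (m : ℕ) (x : MonoidAlgebra k G)
    (z : ⋀[k]^m V) : (GrpOp k ρ m x z : ExteriorAlgebra k V) = exteriorGrp ρ x z := by
  simp [GrpOp, exteriorGrp_apply, Finsupp.sum, LinearMap.sum_apply, Finsupp.lift_apply]
  rfl

theorem coe_AlgOp_apply (ρ : Representation k G V) (m : ℕ) (x : MonoidAlgebra k G)
    (z : ⋀[k]^m V) : (AlgOp k ρ m x z : ExteriorAlgebra k V) = exteriorAlg ρ x z := by
  simp [AlgOp, exteriorAlg_apply, Finsupp.sum, LinearMap.sum_apply, Finsupp.lift_apply]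

theorem GrpOp_eq_AlgOp_iff (ρ : Representation k G V) (m : ℕ) (x : MonoidAlgebra k G) :
    GrpOp k ρ m x = AlgOp k ρ m x ↔
      Set.EqOn (exteriorGrp ρ x) (exteriorAlg ρ x) (⋀[k]^m V) := by
  refine ⟨fun h z hz => ?_, fun h => LinearMap.ext fun z => Subtype.ext ?_⟩
  · simpa [coe_GrpOp_apply, coe_AlgOp_apply] using congr(($h ⟨z, hz⟩ : ExteriorAlgebra k V))
  · rw [coe_GrpOp_apply, coe_AlgOp_apply]
    exact h z.2

theorem forall_le_GrpOp_eq_AlgOp_iff [FiniteDimensional k V] (ρ : Representation k G V)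
    (x : MonoidAlgebra k G) {N : ℕ} (hN : Module.finrank k V ≤ N) :
    (∀ m ≤ N, GrpOp k ρ m x = AlgOp k ρ m x) ↔ exteriorGrp ρ x = exteriorAlg ρ x := by
  refine ⟨fun h => ?_, fun h m _ => (GrpOp_eq_AlgOp_iff ρ m x).mpr fun z _ => congr($h z)⟩
  ext m v
  by_cases hm : m ≤ N
  · exact (GrpOp_eq_AlgOp_iff ρ m x).mp (h m hm) (ιMulti_range k m ⟨v, rfl⟩)
  · simp [ιMulti_eq_zero_of_finrank_lt (show Module.finrank k V < m by omega)]

theorem exteriorGrp_one (ρ : Representation k G V) (x : MonoidAlgebra k G) :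
    exteriorGrp ρ x 1 = augmentation x • 1 := by
  simp [exteriorGrp_apply, augmentation, Finsupp.sum, Finset.sum_smul]

theorem exteriorAlg_one (ρ : Representation k G V) (x : MonoidAlgebra k G) :
    exteriorAlg ρ x 1 = 0 := by
  simp [exteriorAlg_apply, derOp_one]

theorem augmentation_eq_zero_of_exteriorGrp_eq_exteriorAlg {ρ : Representation k G V}
    {x : MonoidAlgebra k G} (h : exteriorGrp ρ x = exteriorAlg ρ x) : augmentation x = 0 := by
  simpa [exteriorGrp_one, exteriorAlg_one] using congr($h 1)

theorem map_exteriorGrp {ρ : Representation k G V} {σ : Representation k G W} {f : V →ₗ[k] W}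
    (hf : ∀ g v, f (ρ g v) = σ g (f v)) (x : MonoidAlgebra k G) (z : ExteriorAlgebra k V) :
    map f (exteriorGrp ρ x z) = exteriorGrp σ x (map f z) := by
  have hcomp (g : G) : (map f).comp (map (ρ g)) = (map (σ g)).comp (map f) := by
    rw [map_comp_map, map_comp_map]
    congr 1
    exact LinearMap.ext (hf g)
  simp [exteriorGrp_apply, map_finsuppSum, ← AlgHom.comp_apply, hcomp]

theorem map_exteriorAlg {ρ : Representation k G V} {σ : Representation k G W} {f : V →ₗ[k] W}
    (hf : ∀ g v, f (ρ g v) = σ g (f v)) (x : MonoidAlgebra k G) (z : ExteriorAlgebra k V) :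
    map f (exteriorAlg ρ x z) = exteriorAlg σ x (map f z) := by
  simp [exteriorAlg_apply, map_finsuppSum, map_derOp f (hf _)]

theorem exteriorGrp_ι_mul {σ : Representation k G W} {e : W} (he : ∀ g, σ g e = e)
    (x : MonoidAlgebra k G) (z : ExteriorAlgebra k W) :
    exteriorGrp σ x (ι k e * z) = ι k e * exteriorGrp σ x z := by
  simp [exteriorGrp_apply, he, Finsupp.mul_sum]

theorem exteriorAlg_ι_mul {σ : Representation k G W} {e : W} (he : ∀ g, σ g e = e)
    (x : MonoidAlgebra k G) (z : ExteriorAlgebra k W) :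
    exteriorAlg σ x (ι k e * z) = augmentation x • (ι k e * z) + ι k e * exteriorAlg σ x z := by
  simp [exteriorAlg_apply, derOp_ι_mul, he, augmentation, Finsupp.sum, Finset.mul_sum,
    Finset.sum_add_distrib, Finset.sum_smul]

theorem exteriorGrp_eq_exteriorAlg_iff_of_add_fixedVector {ρ : Representation k G V}
    {σ : Representation k G W} {f : V →ₗ[k] W} (hf_inj : Function.Injective f)
    (hf : ∀ g v, f (ρ g v) = σ g (f v)) {e : W} (he : ∀ g, σ g e = e)
    (hfe : ∀ w, ∃ u, ∃ c : k, w = f u + c • e) (x : MonoidAlgebra k G) :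
    exteriorGrp ρ x = exteriorAlg ρ x ↔ exteriorGrp σ x = exteriorAlg σ x := by
  constructor
  · intro h
    have hx := augmentation_eq_zero_of_exteriorGrp_eq_exteriorAlg h
    refine LinearMap.ext fun z => ?_
    obtain ⟨a, b, rfl⟩ := exists_eq_map_add_ι_mul_map hfe z
    simp only [map_add, exteriorGrp_ι_mul he, exteriorAlg_ι_mul he, ← map_exteriorGrp hf,
      ← map_exteriorAlg hf, h, hx, zero_smul, zero_add]
  · intro h
    refine LinearMap.ext fun z => map_injective_field (LinearMap.ker_eq_bot.mpr hf_inj) ?_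
    rw [map_exteriorGrp hf, map_exteriorAlg hf, h]

end

theorem exists_eq_add_smul_one {n : ℕ} (w : Fin n → ℂ) :
    ∃ u : sumZero n, ∃ c : ℂ, w = u + c • 1 := by
  refine ⟨⟨w - ((∑ i, w i) / n) • 1, ?_⟩, (∑ i, w i) / n, (sub_add_cancel _ _).symm⟩
  show ∑ i, (w - ((∑ i, w i) / n) • 1) i = 0
  rcases eq_or_ne n 0 with rfl | hn
  · simp
  · have hn' : (n : ℂ) ≠ 0 := Nat.cast_ne_zero.mpr hn
    simp [Finset.sum_sub_distrib, mul_div_cancel₀, hn']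

theorem finrank_sumZero_le (n : ℕ) : Module.finrank ℂ (sumZero n) ≤ n - 1 := by
  rcases eq_or_ne n 0 with rfl | hn
  · simpa using Submodule.finrank_le (sumZero 0)
  · have hlt : sumZero n ≠ ⊤ := fun h => by
      have : (1 : Fin n → ℂ) ∈ sumZero n := h ▸ Submodule.mem_top
      simp [sumZero, hn] at this
    have := Submodule.finrank_lt hlt
    rw [Module.finrank_fin_fun] at this
    omega

/-- `Lie(ℂ^n) = Lie(V)`: an element of `ℂ[S_n]` is a Lie element for the permutation
representation `ℂ^n` (conditions for all `m ≤ n`) iff it is one for the reflection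
representation `V` (conditions for all `m ≤ n − 1`). -/
theorem isLieElement_permRep_iff_reflRep {n : ℕ} (x : MonoidAlgebra ℂ (Equiv.Perm (Fin n))) :
    (∀ m ≤ n, GrpOp ℂ (permRep n) m x = AlgOp ℂ (permRep n) m x) ↔
      (∀ m ≤ n - 1, GrpOp ℂ (reflRep n) m x = AlgOp ℂ (reflRep n) m x) := by
  rw [forall_le_GrpOp_eq_AlgOp_iff (permRep n) x (Module.finrank_fin_fun ℂ).le,
    forall_le_GrpOp_eq_AlgOp_iff (reflRep n) x (finrank_sumZero_le n)]
  exact (exteriorGrp_eq_exteriorAlg_iff_of_add_fixedVector (f := (sumZero n).subtype)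
    Subtype.val_injective (fun _ _ => rfl) (e := 1) (fun _ => rfl) exists_eq_add_smul_one x).symm
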